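/- The sequence a_n = ((n-1)/n)^{n-1} is decreasing in n for n ≥ 2 and converges to 1/e; consequently, in the partial allocation mechanism with identical linear valuations every app is guaranteed at least a fraction 1/e of its proportional fair allocation. -/

import Mathlib

open Filter


lemma key_dec (n : ℕ) (hn : 2 ≤ n) :
    ((((n + 1 : ℕ) : ℝ) - 1) / ((n + 1 : ℕ) : ℝ)) ^ ((n + 1) - 1)
        < (((n : ℝ) - 1) / (n : ℝ)) ^ (n - 1) := by
  have hx2 : (2:ℝ) ≤ (n:ℝ) := by exact_mod_cast hn
  set x : ℝ := (n : ℝ) with hx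
  have hx0 : 0 < x := by linarith
  have hxm : 0 < x - 1 := by linarith
  have hxp : 0 < x + 1 := by linarith
  push_cast
  have hpos : 0 < ((x + 1) / x) ^ n := by positivity
  rw [show x + 1 - 1 = x by ring]
  rw [← mul_lt_mul_iff_of_pos_right hpos]
  have hxin : (x / (x + 1)) ^ n * ((x + 1) / x) ^ n = 1 := by
    rw [← mul_pow]; field_simp; exact one_pow n
  rw [hxin]
  have hn1 : n - 1 + 1 = n := by omega
  have hexp : ((x + 1) / x) ^ n = ((x + 1) / x) ^ (n - 1) * ((x + 1) / x) := by
    rw [← pow_succ, hn1]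
  rw [hexp, ← mul_assoc, ← mul_pow]
  have hcomb : (x - 1) / x * ((x + 1) / x) = 1 + (-(1 / x ^ 2)) := by
    field_simp; ring
  rw [hcomb]
  have hbern : 1 + ((n - 1 : ℕ) : ℝ) * (-(1 / x ^ 2)) ≤ (1 + (-(1 / x ^ 2))) ^ (n - 1) :=
    one_add_mul_le_pow (by
      have h2 : 1 / x ^ 2 ≤ 1 := by
        rw [div_le_one (by positivity)]; nlinarith
      linarith) (n - 1)
  have hc : ((n - 1 : ℕ) : ℝ) = x - 1 := by
    rw [hx]; push_cast [Nat.cast_sub (by omega : 1 ≤ n)]; ring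
  rw [hc] at hbern
  have hfin : (1:ℝ) < (1 + (x - 1) * (-(1 / x ^ 2))) * ((x + 1) / x) := by
    rw [show (1 + (x - 1) * (-(1 / x ^ 2))) * ((x + 1) / x) = (x^3 + 1) / x^3 by
      field_simp; ring]
    rw [lt_div_iff₀ (by positivity)]
    nlinarith
  calc (1:ℝ) < (1 + (x - 1) * (-(1 / x ^ 2))) * ((x + 1) / x) := hfin
    _ ≤ (1 + (-(1 / x ^ 2))) ^ (n - 1) * ((x + 1) / x) :=
        mul_le_mul_of_nonneg_right hbern (by positivity)

lemma key_shift (n : ℕ) (hn : 2 ≤ n) :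
    (((n : ℝ) - 1) / (n : ℝ)) ^ (n - 1)
      = (1 + (-1) / (n:ℝ)) ^ n * ((n:ℝ) / ((n:ℝ) - 1)) := by
  have hgt : (1:ℝ) < (n:ℝ) := by exact_mod_cast (by omega : 1 < n)
  have h0 : (n:ℝ) ≠ 0 := by positivity
  have h1 : (n:ℝ) - 1 ≠ 0 := by linarith
  have heq : 1 + (-1) / (n:ℝ) = ((n:ℝ) - 1) / n := by field_simp; ring
  rw [heq]
  have hn1 : n - 1 + 1 = n := by omega
  set b : ℝ := ((n:ℝ) - 1) / (n:ℝ) with hb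
  have hbpow : b ^ n = b ^ (n - 1) * b := by rw [← pow_succ, hn1]
  rw [hbpow, mul_assoc,
    show b * ((n:ℝ) / ((n:ℝ) - 1)) = 1 by rw [hb]; field_simp, mul_one]

lemma key_lim :
    Filter.Tendsto (fun n : ℕ => (((n : ℝ) - 1) / (n : ℝ)) ^ (n - 1))
      Filter.atTop (nhds (Real.exp 1)⁻¹) := by
  have h1 : Tendsto (fun n : ℕ => (1 + (-1) / (n:ℝ)) ^ n) atTop (nhds (Real.exp (-1))) :=
    Real.tendsto_one_add_div_pow_exp (-1)
  have hA : Tendsto (fun n : ℕ => (n:ℝ) - 1) atTop atTop :=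
    tendsto_atTop_add_const_right _ _ tendsto_natCast_atTop_atTop
  have hB : Tendsto (fun n : ℕ => ((n:ℝ) - 1)⁻¹) atTop (nhds 0) := hA.inv_tendsto_atTop
  have h2 : Tendsto (fun n : ℕ => (n:ℝ) / ((n:ℝ) - 1)) atTop (nhds 1) := by
    have := tendsto_const_nhds (x := (1:ℝ)) (f := atTop (α := ℕ)) |>.add hB
    rw [add_zero] at this
    apply this.congr'
    filter_upwards [eventually_gt_atTop 1] with n hn
    have hgt : (1:ℝ) < (n:ℝ) := by exact_mod_cast hn
    have h1 : (n:ℝ) - 1 ≠ 0 := by linarith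
    field_simp
    ring
  have := h1.mul h2
  rw [mul_one, Real.exp_neg] at this
  apply this.congr'
  filter_upwards [eventually_ge_atTop 2] with n hn
  exact (key_shift n hn).symm


/-- `a n = ((n-1)/n)^(n-1)` is decreasing for `n ≥ 2`, converges to `1/e`,
and hence `a n ≥ 1/e` for all `n ≥ 2`: every app is guaranteed at least a fraction `1/e`
of its proportional fair allocation. -/
theorem stmt_4 :
    (∀ n : ℕ, 2 ≤ n →
      ((((n + 1 : ℕ) : ℝ) - 1) / ((n + 1 : ℕ) : ℝ)) ^ ((n + 1) - 1)
        < (((n : ℝ) - 1) / (n : ℝ)) ^ (n - 1)) ∧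
    Filter.Tendsto (fun n : ℕ => (((n : ℝ) - 1) / (n : ℝ)) ^ (n - 1))
      Filter.atTop (nhds (Real.exp 1)⁻¹) ∧
    (∀ n : ℕ, 2 ≤ n → (Real.exp 1)⁻¹ ≤ (((n : ℝ) - 1) / (n : ℝ)) ^ (n - 1)) := by
  refine ⟨key_dec, key_lim, ?_⟩
  intro n hn
  set a : ℕ → ℝ := fun n => (((n : ℝ) - 1) / (n : ℝ)) ^ (n - 1) with ha
  have hmono : ∀ k, a (n + k) ≤ a n := by
    intro k
    induction k with
    | zero => simp
    | succ k ih =>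
      have h := key_dec (n + k) (by omega)
      have : a (n + (k+1)) < a (n + k) := by
        simpa [ha, show n + (k+1) = (n+k) + 1 from rfl] using h
      linarith
  refine le_of_tendsto key_lim ?_
  filter_upwards [eventually_ge_atTop n] with m hm
  obtain ⟨k, rfl⟩ := Nat.exists_eq_add_of_le hm
  exact hmono k
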